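/- Let (f_k)_{k∈ℕ} and (g_k)_{k∈ℕ} be Bessel sequences in a Hilbert space H and U a nonzero bounded operator on ℓ²(ℕ). If there exist real numbers λ₁ < 1 and λ₂ > −1 such that ‖f − M_{U,(g_k),(f_k)} f‖ ≤ λ₁‖f‖ + λ₂‖M_{U,(g_k),(f_k)} f‖ for all f ∈ H, then (f_k) is a frame for H. -/

import Mathlib

/-!
Write `M = D ∘ U ∘ C` for the multiplier. The reverse triangle inequality turns the perturbation
condition into `(1 - λ₁) ‖x‖ ≤ (1 + λ₂) ‖M x‖`, and since `D ∘ U` is bounded this makes the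
analysis operator bounded below: `‖C x‖ ≥ a ‖x‖` for some `a > 0`. As `‖C x‖²` is the frame sum,
`a²` is a lower frame bound; the Bessel bound is the upper one.
-/

noncomputable section

local notation "ℓ²" => lp (fun _ : ℕ => ℂ) 2

theorem lp.norm_sq_eq_tsum {α : Type*} {E : α → Type*} [∀ i, NormedAddCommGroup (E i)]
    (f : lp E 2) : ‖f‖ ^ 2 = ∑' i, ‖f i‖ ^ 2 := by
  have h := lp.norm_rpow_eq_tsum (p := 2) (by norm_num) f
  simp only [ENNReal.toReal_ofNat, Real.rpow_two] at h
  exact h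

theorem one_sub_mul_norm_le_of_norm_sub_le {E : Type*} [SeminormedAddCommGroup E] {x y : E}
    {lam₁ lam₂ : ℝ} (h : ‖x - y‖ ≤ lam₁ * ‖x‖ + lam₂ * ‖y‖) :
    (1 - lam₁) * ‖x‖ ≤ (1 + lam₂) * ‖y‖ := by
  linarith [norm_sub_norm_le x y]

theorem ContinuousLinearMap.exists_pos_mul_norm_le_of_comp {𝕜 E F G : Type*}
    [NontriviallyNormedField 𝕜] [SeminormedAddCommGroup E] [SeminormedAddCommGroup F]
    [SeminormedAddCommGroup G] [NormedSpace 𝕜 E] [NormedSpace 𝕜 F] [NormedSpace 𝕜 G]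
    (L : F →L[𝕜] G) (T : E →L[𝕜] F) {c : ℝ} (hc : 0 < c) (h : ∀ x, c * ‖x‖ ≤ ‖L (T x)‖) :
    ∃ a > 0, ∀ x, a * ‖x‖ ≤ ‖T x‖ := by
  refine ⟨c / (‖L‖ + 1), by positivity, fun x => ?_⟩
  rw [div_mul_eq_mul_div, div_le_iff₀ (by positivity)]
  calc c * ‖x‖ ≤ ‖L (T x)‖ := h x
    _ ≤ ‖L‖ * ‖T x‖ := L.le_opNorm _
    _ ≤ ‖T x‖ * (‖L‖ + 1) := by nlinarith [norm_nonneg (T x)]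

theorem frame_of_multiplier_perturbation_general
    {H : Type*} [NormedAddCommGroup H] [InnerProductSpace ℂ H]
    (f : ℕ → H) (B : ℝ) (hB : 0 < B)
    (hf : ∀ x : H, Summable (fun k => ‖(inner ℂ (f k) x : ℂ)‖ ^ 2) ∧
      ∑' k, ‖(inner ℂ (f k) x : ℂ)‖ ^ 2 ≤ B * ‖x‖ ^ 2)
    (U : ℓ² →L[ℂ] ℓ²)
    (C : H →L[ℂ] ℓ²) (D : ℓ² →L[ℂ] H)
    (hC : ∀ (x : H) (k : ℕ), C x k = (inner ℂ (f k) x : ℂ))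
    (lam₁ lam₂ : ℝ) (hlam₁ : lam₁ < 1) (hlam₂ : -1 < lam₂)
    (hpert : ∀ x : H, ‖x - (D.comp (U.comp C)) x‖ ≤
      lam₁ * ‖x‖ + lam₂ * ‖(D.comp (U.comp C)) x‖) :
    ∃ A > (0 : ℝ), ∃ B'' > (0 : ℝ), ∀ x : H,
      A * ‖x‖ ^ 2 ≤ ∑' k, ‖(inner ℂ (f k) x : ℂ)‖ ^ 2 ∧
      ∑' k, ‖(inner ℂ (f k) x : ℂ)‖ ^ 2 ≤ B'' * ‖x‖ ^ 2 := by
  have hMx : ∀ x, (1 - lam₁) / (1 + lam₂) * ‖x‖ ≤ ‖(D.comp U) (C x)‖ := fun x => by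
    rw [div_mul_eq_mul_div, div_le_iff₀ (by linarith), mul_comm _ (1 + lam₂)]
    exact one_sub_mul_norm_le_of_norm_sub_le (hpert x)
  obtain ⟨a, ha, hCx⟩ :=
    (D.comp U).exists_pos_mul_norm_le_of_comp C (div_pos (by linarith) (by linarith)) hMx
  refine ⟨a ^ 2, by positivity, B, hB, fun x => ⟨?_, (hf x).2⟩⟩
  have hframe : ∑' k, ‖(inner ℂ (f k) x : ℂ)‖ ^ 2 = ‖C x‖ ^ 2 := by
    simp only [lp.norm_sq_eq_tsum, hC]
  rw [hframe, ← mul_pow]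
  exact pow_le_pow_left₀ (by positivity) (hCx x) 2

/-- Let `(f k)` and `(g k)` be Bessel sequences in `H` and `U` a nonzero
bounded operator on `ℓ²(ℕ)`. If there exist `λ₁ < 1` and `λ₂ > -1` such that
`‖x − M x‖ ≤ λ₁ ‖x‖ + λ₂ ‖M x‖` for all `x ∈ H`, where `M = D_g ∘ U ∘ C_f`, then `(f k)` is
a frame for `H`. -/
theorem frame_of_multiplier_perturbation
    {H : Type*} [NormedAddCommGroup H] [InnerProductSpace ℂ H] [CompleteSpace H]
    (f g : ℕ → H) (B B' : ℝ) (hB : 0 < B) (hB' : 0 < B')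
    (hf : ∀ x : H, Summable (fun k => ‖(inner ℂ (f k) x : ℂ)‖ ^ 2) ∧
      ∑' k, ‖(inner ℂ (f k) x : ℂ)‖ ^ 2 ≤ B * ‖x‖ ^ 2)
    (hg : ∀ y : H, Summable (fun k => ‖(inner ℂ (g k) y : ℂ)‖ ^ 2) ∧
      ∑' k, ‖(inner ℂ (g k) y : ℂ)‖ ^ 2 ≤ B' * ‖y‖ ^ 2)
    (U : ℓ² →L[ℂ] ℓ²) (hU : U ≠ 0)
    (C : H →L[ℂ] ℓ²) (D : ℓ² →L[ℂ] H)
    (hC : ∀ (x : H) (k : ℕ), C x k = (inner ℂ (f k) x : ℂ))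
    (hD : ∀ c : ℓ², HasSum (fun k => c k • g k) (D c))
    (lam₁ lam₂ : ℝ) (hlam₁ : lam₁ < 1) (hlam₂ : -1 < lam₂)
    (hpert : ∀ x : H, ‖x - (D.comp (U.comp C)) x‖ ≤
      lam₁ * ‖x‖ + lam₂ * ‖(D.comp (U.comp C)) x‖) :
    ∃ A > (0 : ℝ), ∃ B'' > (0 : ℝ), ∀ x : H,
      A * ‖x‖ ^ 2 ≤ ∑' k, ‖(inner ℂ (f k) x : ℂ)‖ ^ 2 ∧
      ∑' k, ‖(inner ℂ (f k) x : ℂ)‖ ^ 2 ≤ B'' * ‖x‖ ^ 2 :=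
  frame_of_multiplier_perturbation_general f B hB hf U C D hC lam₁ lam₂ hlam₁ hlam₂ hpert
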